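/- For each n ∈ ℕ with n ≥ 1, the function v_n^+ : [0,1] → ℝ defined piecewise on [k/n,(k+1)/n] by v_n^+(x) = −(x−k/n)²/2 + (x−k/n)/(2n) if k is even and v_n^+(x) = (x−k/n)²/2 − (x−k/n)/(2n) if k is odd (k = 0,...,n−1) is continuously differentiable on [0,1], vanishes exactly at the points k/n for k = 0,1,...,n, and satisfies (v_n^+)'(k/n) = (−1)^k/(2n) for 1 ≤ k ≤ n−1. -/

import Mathlib

/-- The stationary solution `v_n^+` of the reaction–diffusion inclusion
`u_t − u_xx ∈ H₀(u)`: on `[k/n, (k+1)/n]` it equals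
`−(x−k/n)²/2 + (x−k/n)/(2n)` for even `k` and `(x−k/n)²/2 − (x−k/n)/(2n)` for odd `k`. -/
noncomputable def vplus (n : ℕ) (x : ℝ) : ℝ :=
  let k : ℤ := ⌊(n : ℝ) * x⌋
  let y : ℝ := x - (k : ℝ) / n
  if Even k then -y ^ 2 / 2 + y / (2 * n) else y ^ 2 / 2 - y / (2 * n)

open Set Filter Topology

namespace VplusAux

/-- the piece of `vplus` with index `k`. -/
noncomputable def g (n : ℕ) (k : ℤ) (x : ℝ) : ℝ :=
  if Even k then -(x - (k : ℝ) / n) ^ 2 / 2 + (x - (k : ℝ) / n) / (2 * n)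
  else (x - (k : ℝ) / n) ^ 2 / 2 - (x - (k : ℝ) / n) / (2 * n)

/-- the sign `(-1)^k`. -/
noncomputable def eps (k : ℤ) : ℝ := if Even k then 1 else -1

/-- the candidate derivative of `vplus`. -/
noncomputable def D (n : ℕ) (x : ℝ) : ℝ :=
  eps ⌊(n : ℝ) * x⌋ * (1 / (2 * (n : ℝ)) - (x - (⌊(n : ℝ) * x⌋ : ℝ) / n))

lemma vplus_eq (n : ℕ) (x : ℝ) : vplus n x = g n ⌊(n : ℝ) * x⌋ x := rfl

lemma eps_sub_one (m : ℤ) : eps (m - 1) = -eps m := by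
  unfold eps
  by_cases h : Even m <;> simp [h, Int.even_sub_one]

lemma eps_natCast (k : ℕ) : eps (k : ℤ) = (-1 : ℝ) ^ k := by
  unfold eps
  by_cases h : Even k
  · simp [Int.even_coe_nat, h, h.neg_one_pow]
  · simp [Int.even_coe_nat, h, (Nat.not_even_iff_odd.mp h).neg_one_pow]

lemma g_eq (n : ℕ) (k : ℤ) (x : ℝ) :
    g n k x = eps k * ((x - (k : ℝ) / n) / (2 * n) - (x - (k : ℝ) / n) ^ 2 / 2) := by
  unfold g eps
  by_cases h : Even k <;> simp [h] <;> ring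

lemma hasDerivAt_g (n : ℕ) (k : ℤ) (x : ℝ) :
    HasDerivAt (g n k) (eps k * (1 / (2 * (n : ℝ)) - (x - (k : ℝ) / n))) x := by
  have h1 : HasDerivAt (fun x : ℝ => x - (k : ℝ) / n) 1 x := (hasDerivAt_id x).sub_const _
  unfold g eps
  by_cases h : Even k <;> simp only [h, if_true, if_false]
  · have h2 := (((h1.pow 2).neg.div_const 2)).add (h1.div_const (2 * n))
    exact h2.congr_deriv (by push_cast; ring)
  · have h2 := (((h1.pow 2).div_const 2)).sub (h1.div_const (2 * n))
    exact h2.congr_deriv (by push_cast; ring)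

lemma floor_eq_of (n : ℕ) (m : ℤ) (x : ℝ) (h1 : (m : ℝ) ≤ n * x) (h2 : (n : ℝ) * x < m + 1) :
    ⌊(n : ℝ) * x⌋ = m := by
  rw [Int.floor_eq_iff]
  exact ⟨h1, h2⟩


lemma div_lt_mul {c a x : ℝ} (hc : 0 < c) (h : a / c < x) : a < c * x := by
  rw [div_lt_iff₀ hc] at h; linarith
lemma div_le_mul {c a x : ℝ} (hc : 0 < c) (h : a / c ≤ x) : a ≤ c * x := by
  rw [div_le_iff₀ hc] at h; linarith
lemma mul_lt_div {c a x : ℝ} (hc : 0 < c) (h : x < a / c) : c * x < a := by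
  rw [lt_div_iff₀ hc] at h; linarith

variable {n : ℕ}

lemma hn0 (hn : 1 ≤ n) : (0 : ℝ) < n := by exact_mod_cast Nat.pos_of_ne_zero (by omega)

/-- key case analysis lemma: near `x`, with `m = ⌊n x⌋`,
either `n*x > m` and `vplus = g n m` near `x`,
or `x = m/n`; then `vplus = g n m` right of `x` and `vplus = g n (m-1)` left of `x`. -/
lemma hasDerivAt_vplus (hn : 1 ≤ n) (x : ℝ) : HasDerivAt (vplus n) (D n x) x := by
  have hpos := hn0 hn
  set m : ℤ := ⌊(n : ℝ) * x⌋ with hm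
  have hml : (m : ℝ) ≤ n * x := Int.floor_le _
  have hmu : (n : ℝ) * x < m + 1 := Int.lt_floor_add_one _
  have hDx : D n x = eps m * (1 / (2 * (n : ℝ)) - (x - (m : ℝ) / n)) := rfl
  rcases eq_or_lt_of_le hml with heq | hlt
  · -- breakpoint x = m / n
    have hx : x = (m : ℝ) / n := by
      rw [eq_div_iff hpos.ne', mul_comm]
      exact heq.symm
    have hxlt : x < ((m : ℝ) + 1) / n := by
      rw [lt_div_iff₀ hpos]
      linarith [hmu]
    have hr : HasDerivWithinAt (vplus n) (eps m * (1 / (2 * (n : ℝ)))) (Ici x) x := by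
      have key := (hasDerivAt_g n m x).hasDerivWithinAt (s := Ici x)
      have hev : vplus n =ᶠ[𝓝[Ici x] x] g n m := by
        filter_upwards [mem_nhdsWithin_of_mem_nhds (Iio_mem_nhds hxlt),
          self_mem_nhdsWithin] with x' h1 h2
        rw [vplus_eq, floor_eq_of n m x']
        · calc (m : ℝ) = n * x := heq
            _ ≤ n * x' := by
              have := mem_Ici.mp h2
              nlinarith
        · exact mul_lt_div hpos h1
      have := key.congr_of_eventuallyEq hev (by rw [vplus_eq])
      have hx0 : x - (m : ℝ) / n = 0 := by rw [hx]; ring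
      rw [hx0, sub_zero] at this
      exact this
    have hl : HasDerivWithinAt (vplus n) (eps m * (1 / (2 * (n : ℝ)))) (Iic x) x := by
      have key := (hasDerivAt_g n (m - 1) x).hasDerivWithinAt (s := Iic x)
      have hgt : ((m : ℝ) - 1) / n < x := by
        rw [div_lt_iff₀ hpos, mul_comm]
        linarith [heq]
      have hx1 : x - ((m - 1 : ℤ) : ℝ) / n = 1 / n := by
        push_cast
        rw [hx]
        field_simp
        ring
      have hval : eps (m - 1) * (1 / (2 * (n : ℝ)) - (x - ((m - 1 : ℤ) : ℝ) / n))
          = eps m * (1 / (2 * (n : ℝ))) := by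
        rw [eps_sub_one, hx1]
        have h2 : (1 : ℝ) / (2 * n) - 1 / n = -(1 / (2 * n)) := by
          field_simp
          ring
        rw [h2]
        ring
      have hgx : g n (m - 1) x = vplus n x := by
        rw [vplus_eq, ← hm, g_eq, g_eq, hx1]
        have hx0 : x - (m : ℝ) / n = 0 := by rw [hx]; ring
        rw [hx0]
        field_simp
        ring
      have hev : vplus n =ᶠ[𝓝[Iic x] x] g n (m - 1) := by
        filter_upwards [mem_nhdsWithin_of_mem_nhds (Ioi_mem_nhds hgt),
          self_mem_nhdsWithin] with x' h1 h2
        rcases eq_or_lt_of_le (mem_Iic.mp h2) with he | hlt'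
        · rw [he, ← hgx]
        · rw [vplus_eq, floor_eq_of n (m - 1) x']
          · push_cast
            linarith [div_lt_mul hpos (mem_Ioi.mp h1)]
          · push_cast
            have h3 : (n : ℝ) * x' < n * x := by nlinarith
            linarith [heq ▸ h3]
      have := key.congr_of_eventuallyEq hev hgx.symm
      rwa [hval] at this
    have hu := hl.union hr
    rw [Set.Iic_union_Ici] at hu
    have := hasDerivWithinAt_univ.mp hu
    have hx0 : x - (m : ℝ) / n = 0 := by rw [hx]; ring
    rw [hDx, hx0, sub_zero]
    exact this
  · -- interior point: m/n < x < (m+1)/n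
    have hx1 : (m : ℝ) / n < x := by rw [div_lt_iff₀ hpos, mul_comm]; exact hlt
    have hx2 : x < ((m : ℝ) + 1) / n := by rw [lt_div_iff₀ hpos]; linarith [hmu]
    have hev : vplus n =ᶠ[𝓝 x] g n m := by
      filter_upwards [Ioo_mem_nhds hx1 hx2] with x' hx'
      rw [vplus_eq, floor_eq_of n m x']
      · linarith [div_lt_mul hpos hx'.1]
      · exact mul_lt_div hpos hx'.2
    rw [hDx]
    exact (hasDerivAt_g n m x).congr_of_eventuallyEq hev

lemma continuous_D (hn : 1 ≤ n) : Continuous (D n) := by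
  have hpos := hn0 hn
  rw [continuous_iff_continuousAt]
  intro x
  have hcontg : ∀ k : ℤ, Continuous (fun x' : ℝ => eps k * (1 / (2 * (n : ℝ)) - (x' - (k : ℝ) / n))) := by
    intro k
    fun_prop
  set m : ℤ := ⌊(n : ℝ) * x⌋ with hm
  have hml : (m : ℝ) ≤ n * x := Int.floor_le _
  have hmu : (n : ℝ) * x < m + 1 := Int.lt_floor_add_one _
  rcases eq_or_lt_of_le hml with heq | hlt
  · have hx : x = (m : ℝ) / n := by
      rw [eq_div_iff hpos.ne', mul_comm]
      exact heq.symm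
    have hxlt : x < ((m : ℝ) + 1) / n := by rw [lt_div_iff₀ hpos]; linarith [hmu]
    have hgt : ((m : ℝ) - 1) / n < x := by rw [div_lt_iff₀ hpos, mul_comm]; linarith [heq]
    have hr : ContinuousWithinAt (D n) (Ici x) x := by
      have key := ((hcontg m).continuousAt (x := x)).continuousWithinAt (s := Ici x)
      refine key.congr_of_eventuallyEq ?_ rfl
      filter_upwards [mem_nhdsWithin_of_mem_nhds (Iio_mem_nhds hxlt),
        self_mem_nhdsWithin] with x' h1 h2
      have hf : ⌊(n : ℝ) * x'⌋ = m := by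
        apply floor_eq_of
        · calc (m : ℝ) = n * x := heq
            _ ≤ n * x' := by
              have := mem_Ici.mp h2
              nlinarith
        · exact mul_lt_div hpos h1
      simp only [D, hf]
    have hl : ContinuousWithinAt (D n) (Iic x) x := by
      have key := ((hcontg (m - 1)).continuousAt (x := x)).continuousWithinAt (s := Iic x)
      have hx1 : x - ((m - 1 : ℤ) : ℝ) / n = 1 / n := by push_cast; rw [hx]; field_simp; ring
      have hDeq : D n x = eps (m - 1) * (1 / (2 * (n : ℝ)) - (x - ((m - 1 : ℤ) : ℝ) / n)) := by
        have hx0 : x - (m : ℝ) / n = 0 := by rw [hx]; ring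
        show eps m * (1 / (2 * (n : ℝ)) - (x - (m : ℝ) / n)) = _
        rw [eps_sub_one, hx1, hx0]
        field_simp
        ring
      refine key.congr_of_eventuallyEq ?_ hDeq
      filter_upwards [mem_nhdsWithin_of_mem_nhds (Ioi_mem_nhds hgt),
        self_mem_nhdsWithin] with x' h1 h2
      rcases eq_or_lt_of_le (mem_Iic.mp h2) with he | hlt'
      · rw [he, hDeq]
      · have hf : ⌊(n : ℝ) * x'⌋ = m - 1 := by
          apply floor_eq_of
          · push_cast
            linarith [div_lt_mul hpos (mem_Ioi.mp h1)]
          · push_cast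
            have h3 : (n : ℝ) * x' < n * x := by nlinarith
            linarith [heq ▸ h3]
        simp only [D, hf]
    have := hl.union hr
    rwa [Set.Iic_union_Ici, continuousWithinAt_univ] at this
  · have hx1 : (m : ℝ) / n < x := by rw [div_lt_iff₀ hpos, mul_comm]; exact hlt
    have hx2 : x < ((m : ℝ) + 1) / n := by rw [lt_div_iff₀ hpos]; linarith [hmu]
    have key := (hcontg m).continuousAt (x := x)
    refine key.congr ?_
    filter_upwards [Ioo_mem_nhds hx1 hx2] with x' hx'
    have hf : ⌊(n : ℝ) * x'⌋ = m := by
      apply floor_eq_of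
      · linarith [div_lt_mul hpos hx'.1]
      · exact mul_lt_div hpos hx'.2
    simp only [D, hf]

end VplusAux

open VplusAux in
/-- `v_n^+` is continuously differentiable on `[0,1]`, vanishes exactly at the points
`k/n`, `k = 0,…,n`, and `(v_n^+)'(k/n) = (−1)^k/(2n)` for `1 ≤ k ≤ n−1`. -/
theorem stmt4 (n : ℕ) (hn : 1 ≤ n) :
    ContDiffOn ℝ 1 (vplus n) (Set.Icc 0 1) ∧
    (∀ x ∈ Set.Icc (0 : ℝ) 1, (vplus n x = 0 ↔ ∃ k : ℕ, k ≤ n ∧ x = (k : ℝ) / n)) ∧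
    (∀ k : ℕ, 1 ≤ k → k ≤ n - 1 →
      deriv (vplus n) ((k : ℝ) / n) = (-1 : ℝ) ^ k / (2 * n)) := by
  have hpos : (0 : ℝ) < n := hn0 hn
  have hd : ∀ x, HasDerivAt (vplus n) (D n x) x := hasDerivAt_vplus hn
  have hdiff : Differentiable ℝ (vplus n) := fun x => (hd x).differentiableAt
  have hderiv : deriv (vplus n) = D n := funext fun x => (hd x).deriv
  have hfloor : ∀ k : ℕ, k ≤ n → ⌊(n : ℝ) * ((k : ℝ) / n)⌋ = (k : ℤ) := by
    intro k hk
    have : (n : ℝ) * ((k : ℝ) / n) = (k : ℝ) := by field_simp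
    rw [this]
    exact_mod_cast Int.floor_natCast k
  refine ⟨?_, ?_, ?_⟩
  · exact (contDiff_one_iff_deriv.mpr ⟨hdiff, hderiv ▸ continuous_D hn⟩).contDiffOn
  · intro x hx
    set m : ℤ := ⌊(n : ℝ) * x⌋ with hm
    have hml : (m : ℝ) ≤ n * x := Int.floor_le _
    have hmu : (n : ℝ) * x < m + 1 := Int.lt_floor_add_one _
    constructor
    · intro h0
      have hv : vplus n x = eps m * ((x - (m : ℝ) / n) / (2 * n) - (x - (m : ℝ) / n) ^ 2 / 2) := by
        rw [vplus_eq, ← hm, g_eq]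
      set y : ℝ := x - (m : ℝ) / n with hy
      have hy0 : 0 ≤ y := by
        rw [hy]
        have : (m : ℝ) / n ≤ x := by rw [div_le_iff₀ hpos, mul_comm]; exact hml
        linarith
      have hy1 : y < 1 / n := by
        rw [hy, sub_lt_iff_lt_add, ← add_div, lt_div_iff₀ hpos, mul_comm]
        linarith [hmu]
      have heps : eps m ≠ 0 := by unfold eps; by_cases h : Even m <;> simp [h]
      have hfac : y / (2 * n) - y ^ 2 / 2 = y * (1 - n * y) / (2 * n) := by field_simp
      have hyz : y = 0 := by
        by_contra hyz
        have hy0' : 0 < y := lt_of_le_of_ne hy0 (Ne.symm hyz)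
        have h1 : 0 < 1 - (n : ℝ) * y := by
          have : (n : ℝ) * y < 1 := by
            calc (n : ℝ) * y < n * (1 / n) := by nlinarith [hy1]
              _ = 1 := by field_simp
          linarith
        have : 0 < y * (1 - (n : ℝ) * y) / (2 * n) := by positivity
        rw [hv, hfac] at h0
        rcases mul_eq_zero.mp h0 with h | h
        · exact heps h
        · linarith
      have hxe : x = (m : ℝ) / n := by rw [hy] at hyz; linarith
      have hm0 : 0 ≤ m := by
        have : (0 : ℝ) ≤ n * x := by nlinarith [hx.1]
        exact_mod_cast Int.floor_nonneg.mpr (by exact_mod_cast this)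
      have hmn : m ≤ (n : ℤ) := by
        have h1 : (n : ℝ) * x ≤ n := by nlinarith [hx.2]
        have := Int.floor_le_floor h1
        rw [← hm] at this
        simpa using this
      refine ⟨m.toNat, ?_, ?_⟩
      · omega
      · rw [hxe]
        congr 1
        exact_mod_cast (Int.toNat_of_nonneg hm0).symm
    · rintro ⟨k, hk, rfl⟩
      rw [vplus_eq, hfloor k hk, g_eq]
      push_cast
      simp
  · intro k hk1 hk2
    have hkn : k ≤ n := by omega
    rw [hderiv]
    show eps ⌊(n : ℝ) * ((k : ℝ) / n)⌋ * (1 / (2 * (n : ℝ)) -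
      (((k : ℝ) / n) - (⌊(n : ℝ) * ((k : ℝ) / n)⌋ : ℝ) / n)) = _
    rw [hfloor k hkn]
    push_cast
    rw [eps_natCast, sub_self, sub_zero]
    ring
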